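/- arXiv:2205.02574 — 6 statements merged into one kernel-verified Lean document; each statement's English description precedes it below -/
import Mathlib

section
/- For every binary word w over {0,1}, val_Fc(101·w) = val_Fc(1·w), i.e., prepending the prefix 10 to a word starting with 1 does not change its Fibonacci's complement value. -/
/-- Fibonacci sequence with F 0 = 1, F 1 = 2. -/
def F (n : ℕ) : ℕ := Nat.fib (n + 2)

/-- Fibonacci extended to integer indices ≥ -2, with F_{-2} = 0, F_{-1} = 1. -/
def Fz (m : ℤ) : ℤ := ((m + 2).toNat.fib : ℤ)

/-- Fibonacci value of a word (most significant digit first):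
`valF (w_{k-1} ⋯ w_0) = ∑ w_i F_i`. -/
def valF : List ℕ → ℕ
  | [] => 0
  | a :: t => a * F t.length + valF t

/-- Fibonacci's complement value:
`valFc (w_{k-1} ⋯ w_0) = ∑ w_i F_i − w_{k-1} F_k`. -/
def valFc (w : List ℕ) : ℤ :=
  (valF w : ℤ) - (w.headD 0 : ℤ) * (F w.length : ℤ)

/-! A leading `1` on a word `u` contributes `F |u| - F (|u| + 1) = -fib (|u| + 1)`, so
`valFc (1 :: u) = valF u - fib (|u| + 1)`. For `u = 0 :: 1 :: w` the extra `1` adds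
`F |w| = fib (|w| + 2)` to `valF`, and `fib (|w| + 3) - fib (|w| + 2) = fib (|w| + 1)`. -/

theorem valF_zero_cons (w : List ℕ) : valF (0 :: w) = valF w := by
  simp [valF]

theorem valFc_one_cons (w : List ℕ) :
    valFc (1 :: w) = valF w - Nat.fib (w.length + 1) := by
  have hrec := Nat.fib_add_two (n := w.length + 1)
  simp only [valFc, valF, F, List.length_cons, List.headD_cons]
  push_cast [hrec]
  ring

theorem neutral_prefix_one_general (w : List ℕ) :
    valFc (1 :: 0 :: 1 :: w) = valFc (1 :: w) := by
  have hrec := Nat.fib_add_two (n := w.length + 1)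
  rw [valFc_one_cons, valFc_one_cons, valF_zero_cons]
  simp only [valF, F, List.length_cons]
  push_cast [hrec]
  ring

theorem neutral_prefix_one (w : List ℕ) (hw : ∀ x ∈ w, x ≤ 1) :
    valFc (1 :: 0 :: 1 :: w) = valFc (1 :: w) :=
  neutral_prefix_one_general w
end

section
/- The map val_F is an increasing bijection from the set S of binary words with no factor 11 and no leading 0, ordered by radix order (shorter words first, then lexicographic), to (ℕ, <). -/
/-- Radix order: shorter words first, ties broken lexicographically. -/
def radLt (u v : List ℕ) : Prop :=
  u.length < v.length ∨ (u.length = v.length ∧ List.Lex (· < ·) u v)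

namespace ValFAux

lemma F_pos (n : ℕ) : 0 < F n := Nat.fib_pos.2 (by omega)

lemma F_mono : Monotone F := fun a b h => Nat.fib_mono (by omega)

lemma F_add_two (n : ℕ) : F (n + 1 + 1) = F (n + 1) + F n := by
  have h : F (n + 1 + 1) = F n + F (n + 1) := Nat.fib_add_two
  omega

lemma le_F (n : ℕ) : n + 1 ≤ F n := by
  induction n with
  | zero => simp [F]
  | succ k ih =>
    have h1 : 1 ≤ Nat.fib (k + 1) := Nat.fib_pos.2 (by omega)
    have h2 : F (k + 1) = Nat.fib (k + 1) + F k := Nat.fib_add_two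
    omega

lemma valF_zero_cons (t : List ℕ) : valF (0 :: t) = valF t := by simp [valF]

lemma valF_one_cons (t : List ℕ) : valF (1 :: t) = F t.length + valF t := by
  simp [valF]

lemma valF_replicate_append (j : ℕ) (w : List ℕ) :
    valF (List.replicate j 0 ++ w) = valF w := by
  induction j with
  | zero => simp
  | succ k ih => simpa [valF, List.replicate_succ] using ih

lemma valF_replicate (j : ℕ) : valF (List.replicate j 0) = 0 := by
  have := valF_replicate_append j []
  simpa [valF] using this

lemma nf_tail {a : ℕ} {t : List ℕ} (h : ¬ [1, 1] <:+: a :: t) :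
    ¬ [1, 1] <:+: t := fun hi => h (hi.trans (List.suffix_cons a t).isInfix)

lemma nf_cons {a : ℕ} {t : List ℕ} (ha : ¬ [1, 1] <+: a :: t)
    (ht : ¬ [1, 1] <:+: t) : ¬ [1, 1] <:+: a :: t := by
  intro h
  rcases List.infix_cons_iff.1 h with h | h
  · exact ha h
  · exact ht h

lemma not_prefix_of_head {a : ℕ} {t : List ℕ} (h : a ≠ 1) :
    ¬ [1, 1] <+: a :: t := by
  rintro ⟨s, hs⟩
  injection hs with h1 _
  exact h h1.symm

lemma nf_replicate_append (j : ℕ) {w : List ℕ} (h : ¬ [1, 1] <:+: w) :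
    ¬ [1, 1] <:+: (List.replicate j 0 ++ w) := by
  induction j with
  | zero => simpa
  | succ k ih =>
    rw [List.replicate_succ, List.cons_append]
    exact nf_cons (not_prefix_of_head (by norm_num)) ih

lemma nf_cons_one {t : List ℕ} (hh : t.head? ≠ some 1) (ht : ¬ [1, 1] <:+: t) :
    ¬ [1, 1] <:+: 1 :: t := by
  refine nf_cons ?_ ht
  rintro ⟨s, hs⟩
  injection hs with _ h2
  rw [← h2] at hh
  simp at hh

/-- Upper bound: a word with digits ≤ 1 and no factor 11 has value < F(length). -/
theorem bound : ∀ w : List ℕ, (∀ x ∈ w, x ≤ 1) → ¬ [1, 1] <:+: w →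
    valF w < F w.length
  | [], _, _ => by simp [valF, F]
  | 0 :: t, h1, h2 => by
    have hb := bound t (fun x hx => h1 x (by simp [hx])) (nf_tail h2)
    have hm : F t.length ≤ F (t.length + 1) := F_mono (Nat.le_add_right _ 1)
    simp only [valF_zero_cons, List.length_cons]
    omega
  | 1 :: [], _, _ => by norm_num [valF, F]
  | 1 :: 1 :: t, _, h2 => by
    exact absurd (List.IsPrefix.isInfix ⟨t, rfl⟩) h2
  | 1 :: 0 :: t, h1, h2 => by
    have hb := bound t (fun x hx => h1 x (by simp [hx])) (nf_tail (nf_tail h2))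
    simp only [valF_one_cons, valF_zero_cons, List.length_cons]
    have hF := F_add_two t.length
    omega
  | 1 :: (b + 2) :: t, h1, _ => by
    have := h1 (b + 2) (by simp)
    omega
  | (a + 2) :: t, h1, _ => by
    have := h1 (a + 2) (by simp)
    omega
  termination_by w => w.length

/-- Lower bound for words starting with 1. -/
lemma lower (t : List ℕ) : F t.length ≤ valF (1 :: t) := by
  rw [valF_one_cons]; omega

/-- Strict monotonicity for equal-length words in lex order. -/
lemma lex_mono : ∀ u v : List ℕ, List.Lex (· < ·) u v → (∀ x ∈ u, x ≤ 1) →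
    ¬ [1, 1] <:+: u → (∀ x ∈ v, x ≤ 1) → u.length = v.length →
    valF u < valF v := by
  intro u
  induction u with
  | nil =>
    intro v hlex _ _ _ hlen
    cases hlex
    simp at hlen
  | cons a u' ih =>
    intro v hlex hu1 hu2 hv1 hlen
    cases hlex with
    | cons h =>
      rename_i l₂
      simp only [List.length_cons] at hlen
      have hlen' : u'.length = l₂.length := by omega
      have hlt := ih l₂ h (fun x hx => hu1 x (by simp [hx])) (nf_tail hu2)
        (fun x hx => hv1 x (by simp [hx])) hlen'
      simp only [valF]
      rw [hlen']
      exact Nat.add_lt_add_left hlt _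
    | rel hab =>
      rename_i b l₂
      have hb : b ≤ 1 := hv1 b (by simp)
      have ha0 : a = 0 := by omega
      have hb1 : b = 1 := by omega
      subst ha0; subst hb1
      simp only [List.length_cons] at hlen
      have hub := bound u' (fun x hx => hu1 x (by simp [hx])) (nf_tail hu2)
      have hlo := lower l₂
      rw [valF_zero_cons]
      have hl : u'.length = l₂.length := by omega
      rw [hl] at hub
      omega

/-- Full strict monotonicity w.r.t. radix order. -/
lemma rad_mono {u v : List ℕ}
    (hu : (∀ x ∈ u, x ≤ 1) ∧ ¬ [1, 1] <:+: u ∧ u.head? ≠ some 0)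
    (hv : (∀ x ∈ v, x ≤ 1) ∧ ¬ [1, 1] <:+: v ∧ v.head? ≠ some 0)
    (h : radLt u v) : valF u < valF v := by
  rcases h with h | ⟨hlen, hlex⟩
  · match v, h with
    | b :: t, h =>
      have hb : b ≤ 1 := hv.1 b (by simp)
      have hb0 : b ≠ 0 := fun hb0 => hv.2.2 (by simp [hb0])
      have hb1 : b = 1 := by omega
      subst hb1
      have h1 := bound u hu.1 hu.2.1
      have h2 := lower t
      have h3 : F u.length ≤ F t.length := F_mono (by simpa using Nat.lt_succ_iff.1 h)
      omega
  · exact lex_mono u v hlex hu.1 hu.2.1 hv.1 hlen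

lemma rad_total (u v : List ℕ) (h : u ≠ v) : radLt u v ∨ radLt v u := by
  rcases lt_trichotomy u.length v.length with hl | hl | hl
  · exact Or.inl (Or.inl hl)
  · haveI : IsTrichotomous (List ℕ) (List.Lex (· < ·)) := by infer_instance
    rcases trichotomous_of (List.Lex (· < ·)) u v with hx | hx | hx
    · exact Or.inl (Or.inr ⟨hl, hx⟩)
    · exact absurd hx h
    · exact Or.inr (Or.inr ⟨hl.symm, hx⟩)
  · exact Or.inr (Or.inl hl)

/-- Surjectivity: every natural number is the value of some valid word. -/
theorem surj : ∀ n : ℕ, ∃ w : List ℕ,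
    ((∀ x ∈ w, x ≤ 1) ∧ ¬ [1, 1] <:+: w ∧ w.head? ≠ some 0) ∧ valF w = n := by
  intro n
  induction n using Nat.strong_induction_on with
  | _ n ih =>
    rcases Nat.eq_zero_or_pos n with rfl | hn
    · exact ⟨[], ⟨by simp, by simp, by simp⟩, rfl⟩
    · have hg2 : 2 ≤ Nat.greatestFib n := Nat.le_greatestFib.2 (by
        have : Nat.fib 2 = 1 := by decide
        omega)
      obtain ⟨k, hgk⟩ : ∃ k, Nat.greatestFib n = k + 2 := ⟨Nat.greatestFib n - 2, by omega⟩
      have hFk : F k ≤ n := by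
        have := Nat.fib_greatestFib_le n
        rwa [hgk] at this
      have hnlt : n < Nat.fib (k + 3) := by
        have := Nat.lt_fib_greatestFib_add_one n
        rwa [hgk] at this
      have hmfib : n - F k < Nat.fib (k + 1) := by
        have hsplit : Nat.fib (k + 3) = Nat.fib (k + 1) + Nat.fib (k + 2) :=
          Nat.fib_add_two
        have : F k = Nat.fib (k + 2) := rfl
        omega
      have hmn : n - F k < n := by have := F_pos k; omega
      obtain ⟨w', ⟨hw1, hw2, hw3⟩, hwv⟩ := ih (n - F k) hmn
      have hlen : w' = [] ∨ (w'.length + 1 ≤ k ∧ 1 ≤ k) := by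
        match w', hw3 with
        | [], _ => exact Or.inl rfl
        | b :: t, hh =>
          have hb : b ≤ 1 := hw1 b (by simp)
          have hb1 : b = 1 := by
            rcases Nat.lt_or_ge b 1 with h | h
            · exact absurd (by simp [Nat.lt_one_iff.1 h]) hh
            · omega
          subst hb1
          have h2 := lower t
          rw [hwv] at h2
          have hfl : Nat.fib (t.length + 2) < Nat.fib (k + 1) := by
            have : Nat.fib (t.length + 2) = F t.length := rfl
            omega
          have hlt : t.length + 2 ≤ k := by
            by_contra hc
            exact absurd (Nat.fib_mono (by omega : k + 1 ≤ t.length + 2)) (by omega)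
          exact Or.inr ⟨by simp only [List.length_cons]; omega, by omega⟩
      rcases hlen with rfl | ⟨hl, hk1⟩
      · -- n = F k
        refine ⟨1 :: List.replicate k 0, ⟨?_, ?_, by simp⟩, ?_⟩
        · intro x hx
          simp only [List.mem_cons, List.mem_replicate] at hx
          rcases hx with rfl | ⟨_, rfl⟩
          · exact le_refl 1
          · omega
        · refine nf_cons_one ?_ ?_
          · match k with
            | 0 => simp
            | k' + 1 => simp [List.replicate_succ]
          · have : ¬ [1, 1] <:+: ([] : List ℕ) := by simp
            simpa using nf_replicate_append k this
        · rw [valF_one_cons, List.length_replicate, valF_replicate]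
          simp only [valF] at hwv
          omega
      · -- general case
        obtain ⟨j, hj⟩ : ∃ j, k - w'.length = j + 1 := ⟨k - w'.length - 1, by omega⟩
        refine ⟨1 :: (List.replicate (j + 1) 0 ++ w'), ⟨?_, ?_, by simp⟩, ?_⟩
        · intro x hx
          simp only [List.mem_cons, List.mem_append, List.mem_replicate] at hx
          rcases hx with rfl | ⟨_, rfl⟩ | hx
          · exact le_refl 1
          · omega
          · exact hw1 x hx
        · refine nf_cons_one ?_ (nf_replicate_append (j + 1) hw2)
          simp [List.replicate_succ]
        · rw [valF_one_cons, valF_replicate_append]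
          have hlenl : (List.replicate (j + 1) 0 ++ w').length = k := by
            simp only [List.length_append, List.length_replicate]
            omega
          rw [hlenl, hwv]
          omega

end ValFAux

theorem valF_increasing_bijection :
    Set.BijOn valF
      {w : List ℕ | (∀ x ∈ w, x ≤ 1) ∧ ¬ [1, 1] <:+: w ∧ w.head? ≠ some 0}
      Set.univ ∧
    ∀ u ∈ {w : List ℕ | (∀ x ∈ w, x ≤ 1) ∧ ¬ [1, 1] <:+: w ∧ w.head? ≠ some 0},
      ∀ v ∈ {w : List ℕ | (∀ x ∈ w, x ≤ 1) ∧ ¬ [1, 1] <:+: w ∧ w.head? ≠ some 0},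
        radLt u v → valF u < valF v := by
  constructor
  · refine ⟨fun _ _ => trivial, ?_, ?_⟩
    · intro u hu v hv hval
      by_contra hne
      rcases ValFAux.rad_total u v hne with h | h
      · exact absurd hval (Nat.ne_of_lt (ValFAux.rad_mono hu hv h))
      · exact absurd hval.symm (Nat.ne_of_lt (ValFAux.rad_mono hv hu h))
    · intro n _
      obtain ⟨w, hw, hv⟩ := ValFAux.surj n
      exact ⟨w, hw, hv⟩
  · intro u hu v hv h
    exact ValFAux.rad_mono hu hv h
end

section
/- Let u, w be ternary words over {0,1,2} such that val_F(u) = val_F(w·000) (where w·000 denotes w followed by three 0 digits). Then val_F(u·0) − val_F(w·0000) ∈ {0, +1}. -/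
/-- Least-significant-digit-first Fibonacci value with offset `e`. -/
def nsF (e : ℕ) : List ℕ → ℕ
  | [] => 0
  | a :: t => a * Nat.fib e + nsF (e + 1) t

/-- Real error sum `∑ l_i (-q)^(e+i)`. -/
noncomputable def arF (q : ℝ) (e : ℕ) : List ℕ → ℝ
  | [] => 0
  | a :: t => a * (-q) ^ e + arF q (e + 1) t

lemma nsF_append (l : List ℕ) : ∀ (e a : ℕ),
    nsF e (l ++ [a]) = nsF e l + a * Nat.fib (e + l.length) := by
  induction l with
  | nil => intro e a; simp [nsF]
  | cons b t ih =>
      intro e a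
      have h1 : nsF e ((b :: t) ++ [a]) = b * Nat.fib e + nsF (e + 1) (t ++ [a]) := rfl
      have h2 : nsF e (b :: t) = b * Nat.fib e + nsF (e + 1) t := rfl
      rw [h1, h2, ih, show e + (b :: t).length = e + 1 + t.length by
        simp only [List.length_cons]; omega]
      ring

lemma valF_eq (u : List ℕ) : valF u = nsF 2 u.reverse := by
  induction u with
  | nil => rfl
  | cons a t ih =>
      simp only [valF, List.reverse_cons, nsF_append, ih, F, List.length_reverse]
      rw [show 2 + t.length = t.length + 2 by omega]
      ring

lemma fib_id (q : ℝ) (hq : q ^ 2 = 1 - q) :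
    ∀ n : ℕ, (Nat.fib (n + 2) : ℝ) = (1 + q) * Nat.fib (n + 1) + (-q) ^ (n + 1) := by
  intro n
  induction n with
  | zero => simp [Nat.fib]
  | succ n ih =>
      have hrec : Nat.fib (n + 3) = Nat.fib (n + 1) + Nat.fib (n + 2) := by
        rw [show n + 3 = (n + 1) + 2 by omega, Nat.fib_add_two]
      rw [show n + 1 + 2 = n + 3 by omega, hrec]
      push_cast
      rw [ih]
      linear_combination (-(Nat.fib (n + 1) : ℝ)) * hq

lemma nsF_id (q : ℝ) (hq : q ^ 2 = 1 - q) (l : List ℕ) : ∀ e : ℕ,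
    ((nsF (e + 2) l : ℕ) : ℝ) = (1 + q) * (nsF (e + 1) l) + arF q (e + 1) l := by
  induction l with
  | nil => intro e; simp [nsF, arF]
  | cons a t ih =>
      intro e
      simp only [nsF, arF]
      push_cast
      rw [show e + 1 + 2 = (e + 1) + 2 by omega, ih (e + 1), fib_id q hq e]
      ring

lemma arF_bounds (q : ℝ) (hq : q ^ 2 = 1 - q) (hq0 : 0 < q) (l : List ℕ)
    (hl : ∀ x ∈ l, x ≤ 2) : ∀ e : ℕ, 1 ≤ e →
    ((if Even e then -(2 * q ^ e) else -(2 * q ^ (e - 1))) ≤ arF q e l ∧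
      arF q e l ≤ (if Even e then 2 * q ^ (e - 1) else 2 * q ^ e)) := by
  induction l with
  | nil =>
      intro e he
      have h1 : (0:ℝ) ≤ 2 * q ^ e := by positivity
      have h2 : (0:ℝ) ≤ 2 * q ^ (e - 1) := by positivity
      constructor <;> simp [arF] <;> split <;> linarith
  | cons a t ih =>
      intro e he
      obtain ⟨e, rfl⟩ : ∃ e', e = e' + 1 := ⟨e - 1, by omega⟩
      have ha : (a : ℝ) ≤ 2 := by exact_mod_cast hl a List.mem_cons_self
      have ha0 : (0:ℝ) ≤ (a : ℝ) := by positivity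
      have ht := ih (fun x hx => hl x (List.mem_cons_of_mem a hx)) (e + 2) (by omega)
      have hp : (0:ℝ) < q ^ (e + 1) := by positivity
      have key : q ^ (e + 1) + q ^ (e + 2) = q ^ e := by
        have h1 : q ^ (e + 1) = q ^ e * q := by ring
        have h2 : q ^ (e + 2) = q ^ e * q ^ 2 := by ring
        rw [h1, h2, hq]; ring
      have hmul1 : (a : ℝ) * q ^ (e + 1) ≤ 2 * q ^ (e + 1) :=
        mul_le_mul_of_nonneg_right ha hp.le
      have hmul0 : (0:ℝ) ≤ (a : ℝ) * q ^ (e + 1) := mul_nonneg ha0 hp.le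
      simp only [arF, show e + 1 + 1 = e + 2 from rfl]
      simp only [show e + 2 - 1 = e + 1 by omega, Nat.add_sub_cancel] at ht ⊢
      rcases Nat.even_or_odd (e + 1) with hev | hod
      · have hno : ¬ Even (e + 2) := by
          rw [show e + 2 = (e + 1) + 1 from rfl, Nat.even_add_one]
          simpa using hev
        have hpow : (-q) ^ (e + 1) = q ^ (e + 1) := hev.neg_pow q
        simp only [if_pos hev, if_neg hno] at ht ⊢
        rw [hpow]
        constructor
        · linarith [ht.1]
        · linarith [ht.2, key]
      · have hyes : Even (e + 2) := by
          rcases hod with ⟨k, hk⟩; exact ⟨k + 1, by omega⟩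
        have hod' : ¬ Even (e + 1) := by
          intro hc; rcases hc with ⟨m, hm⟩; rcases hod with ⟨k, hk⟩; omega
        have hpow : (-q) ^ (e + 1) = -(q ^ (e + 1)) := by
          rcases hod with ⟨k, hk⟩
          exact Odd.neg_pow ⟨k, by omega⟩ q
        simp only [if_neg hod', if_pos hyes] at ht ⊢
        rw [hpow]
        constructor
        · linarith [ht.1, key]
        · linarith [ht.2]

theorem append_zero_diff_000 (u w : List ℕ) (hu : ∀ x ∈ u, x ≤ 2) (hw : ∀ x ∈ w, x ≤ 2)
    (h : valF u = valF (w ++ [0, 0, 0])) :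
    (valF (u ++ [0]) : ℤ) - (valF (w ++ [0, 0, 0, 0]) : ℤ) ∈ ({0, 1} : Set ℤ) := by
  set q : ℝ := (Real.sqrt 5 - 1) / 2 with hqdef
  have hs : Real.sqrt 5 ^ 2 = 5 := Real.sq_sqrt (by norm_num)
  have hsnn : (0:ℝ) ≤ Real.sqrt 5 := Real.sqrt_nonneg 5
  have hs2 : 2 < Real.sqrt 5 := by nlinarith
  have hs3 : Real.sqrt 5 < 9/4 := by nlinarith
  have hq : q ^ 2 = 1 - q := by rw [hqdef]; linear_combination hs / 4
  have hq0 : 0 < q := by rw [hqdef]; linarith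
  have hqlo : 1/2 < q := by rw [hqdef]; linarith
  have hqhi : q < 5/8 := by rw [hqdef]; linarith
  set U := u.reverse with hU
  set W := w.reverse with hW
  have hUd : ∀ x ∈ U, x ≤ 2 := fun x hx => hu x (List.mem_reverse.mp hx)
  have hWd : ∀ x ∈ W, x ≤ 2 := fun x hx => hw x (List.mem_reverse.mp hx)
  have h3 : valF (w ++ [0, 0, 0]) = nsF 5 W := by
    rw [valF_eq, List.reverse_append]
    simp [nsF]; rfl
  have h2 : nsF 2 U = nsF 5 W := by
    rw [valF_eq] at h; rw [← h3]; exact h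
  have g1 : valF (u ++ [0]) = nsF 3 U := by
    rw [valF_eq, List.reverse_append]; simp [nsF]; rfl
  have g2 : valF (w ++ [0, 0, 0, 0]) = nsF 6 W := by
    rw [valF_eq, List.reverse_append]; simp [nsF]; rfl
  rw [g1, g2]
  have idU := nsF_id q hq U 1
  have idW := nsF_id q hq W 4
  norm_num at idU idW
  have bU := arF_bounds q hq hq0 U hUd 2 (by omega)
  have bW := arF_bounds q hq hq0 W hWd 5 (by omega)
  norm_num [Nat.even_iff] at bU bW
  have hq3 : q ^ 3 = 2 * q - 1 := by linear_combination (q - 1) * hq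
  have hq4 : q ^ 4 = 2 - 3 * q := by linear_combination (q ^ 2 - q + 2) * hq
  have hq5 : q ^ 5 = 5 * q - 3 := by linear_combination (q ^ 3 - q ^ 2 + 2 * q - 3) * hq
  have hD : ((nsF 3 U : ℝ)) - (nsF 6 W : ℝ) = arF q 2 U - arF q 5 W := by
    rw [idU, idW]
    have hc : ((nsF 2 U : ℕ) : ℝ) = ((nsF 5 W : ℕ) : ℝ) := by exact_mod_cast h2
    rw [hc]; ring
  have hlow : (-1 : ℝ) < (nsF 3 U : ℝ) - (nsF 6 W : ℝ) := by
    rw [hD]; linarith [bU.1, bW.2, hq, hq5, hqhi]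
  have hhigh : ((nsF 3 U : ℝ)) - (nsF 6 W : ℝ) < 2 := by
    rw [hD]; linarith [bU.2, bW.1, hq4, hqlo]
  have hzlow : (-1 : ℤ) < (nsF 3 U : ℤ) - (nsF 6 W : ℤ) := by exact_mod_cast hlow
  have hzhigh : ((nsF 3 U : ℤ)) - (nsF 6 W : ℤ) < 2 := by exact_mod_cast hhigh
  simp only [Set.mem_insert_iff, Set.mem_singleton_iff]
  omega
end

section
/- Let u, w be ternary words over {0,1,2} such that val_F(u) = val_F(w·101). Then val_F(u·0) − val_F(w·1010) ∈ {−1, 0}. -/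
noncomputable def phiR : ℝ := (1 + Real.sqrt 5) / 2
noncomputable def psiR : ℝ := (1 - Real.sqrt 5) / 2

lemma sqrt5_sq : Real.sqrt 5 ^ 2 = 5 := Real.sq_sqrt (by norm_num)

lemma sqrt5_pos : (0:ℝ) < Real.sqrt 5 := Real.sqrt_pos.mpr (by norm_num)

lemma psiR_neg : psiR < 0 := by
  have := sqrt5_sq
  have := sqrt5_pos
  unfold psiR
  nlinarith

lemma fib_succ_real (n : ℕ) : (Nat.fib (n+1) : ℝ) = phiR * Nat.fib n + psiR ^ n := by
  induction n with
  | zero => simp [phiR, psiR]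
  | succ n ih =>
    have h5 := sqrt5_sq
    rw [Nat.fib_add_two]
    push_cast
    rw [ih]
    unfold phiR psiR at *
    ring_nf
    nlinarith [ih, sq_nonneg (((1:ℝ) - Real.sqrt 5)/2)]

noncomputable def err : List ℕ → ℝ
  | [] => 0
  | a :: t => a * psiR ^ (t.length + 2) + err t

lemma shift_eq (u : List ℕ) : (valF (u ++ [0]) : ℝ) = phiR * valF u + err u := by
  induction u with
  | nil => simp [valF, err, F]
  | cons a t ih =>
    have key : (F (t.length + 1) : ℝ) = phiR * F t.length + psiR ^ (t.length + 2) := by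
      unfold F
      have := fib_succ_real (t.length + 2)
      convert this using 2
    simp only [List.cons_append, valF, err, List.length_append, List.length_cons,
      List.length_nil, List.append_eq]
    push_cast
    rw [ih]
    rw [show t.length + 1 = t.length + 1 from rfl] at key
    nlinarith [key]

lemma err_append (u : List ℕ) (a : ℕ) : err (u ++ [a]) = psiR * err u + a * psiR ^ 2 := by
  induction u with
  | nil => simp [err]
  | cons b t ih =>
    simp only [List.cons_append, err, List.length_append, List.length_cons, List.length_nil,
      List.append_eq]
    rw [ih]
    ring

lemma err_bounds (u : List ℕ) (hu : ∀ x ∈ u, x ≤ 2) :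
    Real.sqrt 5 - 3 < err u ∧ err u < Real.sqrt 5 - 1 := by
  have h5 := sqrt5_sq
  have hp := sqrt5_pos
  induction u using List.reverseRecOn with
  | nil =>
    constructor <;> (simp [err]; nlinarith)
  | append_singleton t a ih =>
    have ht : ∀ x ∈ t, x ≤ 2 := fun x hx => hu x (by simp [hx])
    have ha : (a:ℝ) ≤ 2 := by
      exact_mod_cast hu a (by simp)
    have ha0 : (0:ℝ) ≤ (a:ℝ) := Nat.cast_nonneg a
    obtain ⟨ih1, ih2⟩ := ih ht
    rw [err_append]
    have hpsi : psiR = (1 - Real.sqrt 5)/2 := rfl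
    constructor
    · nlinarith [mul_pos (sub_pos.mpr ih2) (neg_pos.mpr psiR_neg), sq_nonneg psiR]
    · nlinarith [mul_pos (sub_pos.mpr (show Real.sqrt 5 - 3 < err t from ih1))
        (neg_pos.mpr psiR_neg), sq_nonneg psiR]

theorem append_zero_diff_101 (u w : List ℕ) (hu : ∀ x ∈ u, x ≤ 2) (hw : ∀ x ∈ w, x ≤ 2)
    (h : valF u = valF (w ++ [1, 0, 1])) :
    (valF (u ++ [0]) : ℤ) - (valF (w ++ [1, 0, 1, 0]) : ℤ) ∈ ({-1, 0} : Set ℤ) := by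
  have h5 := sqrt5_sq
  have hp := sqrt5_pos
  have hlist : w ++ [1, 0, 1, 0] = (w ++ [1, 0, 1]) ++ [0] := by simp
  have hlist2 : (((w ++ [1]) ++ [0]) ++ [1]) = w ++ [1, 0, 1] := by simp
  have e3 : err (w ++ [1, 0, 1]) = psiR ^ 3 * err w + psiR ^ 2 + psiR ^ 4 := by
    rw [← hlist2, err_append, err_append, err_append]
    push_cast
    ring
  have h1 := shift_eq u
  have h2 := shift_eq (w ++ [1, 0, 1])
  set D : ℤ := (valF (u ++ [0]) : ℤ) - (valF (w ++ [1, 0, 1, 0]) : ℤ) with hDdef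
  have hD : (D : ℝ) = err u - err (w ++ [1, 0, 1]) := by
    have hcast : ((valF u : ℕ) : ℝ) = ((valF (w ++ [1,0,1]) : ℕ) : ℝ) := by exact_mod_cast h
    rw [hDdef]
    push_cast
    rw [hlist, h1, h2, hcast]
    ring
  obtain ⟨hu1, hu2⟩ := err_bounds u hu
  have hw101 : ∀ x ∈ w, x ≤ 2 := hw
  obtain ⟨hw1, hw2⟩ := err_bounds w hw
  have hpsi : psiR = (1 - Real.sqrt 5)/2 := rfl
  -- refined bounds on err (w ++ [1,0,1])
  have hcube : psiR ^ 3 = 2 - Real.sqrt 5 := by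
    rw [hpsi]; linear_combination ((3 - Real.sqrt 5)/8) * h5
  have hsq : psiR ^ 2 = (3 - Real.sqrt 5)/2 := by
    rw [hpsi]; linear_combination (1/4 : ℝ) * h5
  have h4 : psiR ^ 4 = (7 - 3 * Real.sqrt 5)/2 := by
    rw [hpsi]; linear_combination ((Real.sqrt 5 ^ 2 - 4 * Real.sqrt 5 + 11)/16) * h5
  have hE1 : Real.sqrt 5 - 2 < err (w ++ [1, 0, 1]) := by
    rw [e3, hcube, hsq, h4]
    nlinarith
  have hE2 : err (w ++ [1, 0, 1]) < 3 * Real.sqrt 5 - 6 := by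
    rw [e3, hcube, hsq, h4]
    nlinarith
  have hub : (D : ℝ) < 1 := by rw [hD]; nlinarith
  have hlb : (-2 : ℝ) < (D : ℝ) := by rw [hD]; nlinarith
  have hub' : D < 1 := by exact_mod_cast hub
  have hlb' : (-2 : ℤ) < D := by exact_mod_cast hlb
  simp only [Set.mem_insert_iff, Set.mem_singleton_iff]
  omega
end

section
/- Let S = {000, 001, 010, 100, 101} be the set of length-3 binary words with no factor 11. Suppose u ∈ {0,1,2}*, w ∈ {0,1}*, and s ∈ S satisfy |u| = |w| and val_F(u) = val_F(w·s). Then for every digit a ∈ {0,1,2}, there exist a unique bit b ∈ {0,1} and a unique t ∈ S such that val_F(u·a) = val_F(w·b·t). -/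
/-- The five length-3 binary words with no factor 11. -/
def Sset : Set (List ℕ) :=
  {[0,0,0], [0,0,1], [0,1,0], [1,0,0], [1,0,1]}

/-!
Write `D = val u - val (w 000)` and `D' = val (u 0) - val (w 0000)`. Appending digits `a` to `u`
and `d` to `w` sends `(D, D')` to `(D' + a - 5d, D + D' + 2a - 8d)`, a linear map with eigenvalues
`φ` and `ψ`. The coordinate `D' - φ D` along the contracting direction is multiplied by `ψ` and
shifted by a bounded amount, so it never leaves `[5φ - 9, 4φ - 5]`. Hence `D = val s ∈ [0, 4]`
forces `D' ∈ [0, 7]`, so `val (u a) - val (w 0000) = D' + a` lies in `[0, 9]`, and each number in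
`[0, 9]` is `5 b + val t` for exactly one bit `b` and one `t ∈ S`.
-/

open List Real
open scoped goldenRatio

lemma F_add_two (n : ℕ) : F (n + 2) = F (n + 1) + F n :=
  Nat.fib_add_two.trans (add_comm _ _)

lemma valF_replicate_zero (k : ℕ) : valF (replicate k 0) = 0 := by
  induction k with
  | zero => rfl
  | succ k ih => simp [replicate_succ, valF, ih]

lemma valF_append (x y : List ℕ) :
    valF (x ++ y) = valF (x ++ replicate y.length 0) + valF y := by
  induction x with
  | nil => simp [valF_replicate_zero]
  | cons c x ih => simp only [cons_append, valF, length_append, length_replicate, ih]; ring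

lemma valF_append_replicate_add_two (x : List ℕ) (k : ℕ) :
    valF (x ++ replicate (k + 2) 0) =
      valF (x ++ replicate (k + 1) 0) + valF (x ++ replicate k 0) := by
  induction x with
  | nil => simp [valF_replicate_zero]
  | cons c x ih =>
    simp only [cons_append, valF, length_append, length_replicate, ih, ← add_assoc, F_add_two]
    ring

lemma valF_append_cons_replicate (x : List ℕ) (a k : ℕ) :
    valF (x ++ a :: replicate k 0) = valF (x ++ replicate (k + 1) 0) + a * F k := by
  rw [valF_append]
  simp [valF, valF_replicate_zero]

lemma valF_append_singleton (x : List ℕ) (a : ℕ) : valF (x ++ [a]) = valF (x ++ [0]) + a := by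
  simpa [F] using valF_append_cons_replicate x a 0

noncomputable def defect (u w : List ℕ) : ℝ :=
  ((valF (u ++ [0]) : ℝ) - valF (w ++ [0, 0, 0, 0])) - φ * ((valF u : ℝ) - valF (w ++ [0, 0, 0]))

lemma defect_append_singleton (u w : List ℕ) (a d : ℕ) :
    defect (u ++ [a]) (w ++ [d]) = ψ * defect u w + (2 - φ) * a + (5 * φ - 8) * d := by
  have hu₁ : valF (u ++ [a] ++ [0]) = valF (u ++ [0]) + valF u + 2 * a := by
    have h := valF_append_cons_replicate u a 1
    rw [valF_append_replicate_add_two u 0] at h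
    simpa [F, Nat.fib_add_two, mul_comm] using h
  have hw₃ : valF (w ++ [d] ++ [0, 0, 0]) = valF (w ++ [0, 0, 0, 0]) + 5 * d := by
    simpa [F, Nat.fib_add_two, mul_comm] using valF_append_cons_replicate w d 3
  have hw₄ : valF (w ++ [d] ++ [0, 0, 0, 0]) =
      valF (w ++ [0, 0, 0, 0]) + valF (w ++ [0, 0, 0]) + 8 * d := by
    have h := valF_append_cons_replicate w d 4
    rw [valF_append_replicate_add_two w 3] at h
    simpa [F, Nat.fib_add_two, mul_comm] using h
  unfold defect
  rw [valF_append_singleton u a, hu₁, hw₃, hw₄, ← one_sub_goldenConj]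
  have hφ := goldenRatio_sq
  generalize φ = g at hφ ⊢
  push_cast
  linear_combination (↑(valF (w ++ [0, 0, 0])) - ↑(valF u) : ℝ) * hφ

lemma eight_fifths_lt_goldenRatio : 8 / 5 < φ := by
  nlinarith [goldenRatio_sq, one_lt_goldenRatio]

lemma goldenRatio_lt_thirteen_eighths : φ < 13 / 8 := by
  nlinarith [goldenRatio_sq, one_lt_goldenRatio]

/- The lower end is reached exactly, `ψ (4φ - 5) = 5φ - 9`; the upper end needs `φ < 13 / 8`. -/
lemma mapsTo_defect_step {a d : ℕ} (ha : a ≤ 2) (hd : d ≤ 1) :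
    Set.MapsTo (fun X ↦ ψ * X + (2 - φ) * a + (5 * φ - 8) * d)
      (Set.Icc (5 * φ - 9) (4 * φ - 5)) (Set.Icc (5 * φ - 9) (4 * φ - 5)) := by
  rintro X ⟨hL, hU⟩
  have ha' : (a : ℝ) ≤ 2 := by exact_mod_cast ha
  have hd' : (d : ℝ) ≤ 1 := by exact_mod_cast hd
  have h₁ := eight_fifths_lt_goldenRatio
  have h₂ := goldenRatio_lt_thirteen_eighths
  rw [← one_sub_goldenConj]
  constructor <;> nlinarith [goldenRatio_sq, Nat.cast_nonneg (α := ℝ) a, Nat.cast_nonneg (α := ℝ) d]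

lemma defect_mem_Icc {u w : List ℕ} (hlen : u.length = w.length) (hu : ∀ x ∈ u, x ≤ 2)
    (hw : ∀ x ∈ w, x ≤ 1) : defect u w ∈ Set.Icc (5 * φ - 9) (4 * φ - 5) := by
  induction u using reverseRecOn generalizing w with
  | nil =>
    obtain rfl : w = [] := length_eq_zero_iff.1 hlen.symm
    have h₁ := eight_fifths_lt_goldenRatio
    have h₂ := goldenRatio_lt_thirteen_eighths
    simp only [defect, nil_append]
    constructor <;> norm_num [valF, F] <;> linarith
  | append_singleton u a ih =>
    obtain ⟨w, d, rfl⟩ : ∃ w' d, w = w' ++ [d] := by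
      rcases w.eq_nil_or_concat with rfl | h
      · simp at hlen
      · simpa using h
    simp only [length_append, length_singleton, Nat.add_right_cancel_iff] at hlen
    simp only [mem_append, mem_singleton] at hu hw
    rw [defect_append_singleton]
    exact mapsTo_defect_step (hu a (Or.inr rfl)) (hw d (Or.inr rfl))
      (ih hlen (fun x hx ↦ hu x (Or.inl hx)) (fun x hx ↦ hw x (Or.inl hx)))

lemma valF_append_zero_mem_Icc {u w : List ℕ} (hlen : u.length = w.length)
    (hu : ∀ x ∈ u, x ≤ 2) (hw : ∀ x ∈ w, x ≤ 1) {v : ℕ} (hv : v ≤ 4)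
    (hval : valF u = valF (w ++ [0, 0, 0]) + v) :
    valF (u ++ [0]) ∈ Set.Icc (valF (w ++ [0, 0, 0, 0])) (valF (w ++ [0, 0, 0, 0]) + 7) := by
  obtain ⟨hL, hU⟩ := defect_mem_Icc hlen hu hw
  simp only [defect, hval, Nat.cast_add, add_sub_cancel_left] at hL hU
  have hv' : (v : ℝ) ≤ 4 := by exact_mod_cast hv
  have h₁ := eight_fifths_lt_goldenRatio
  have h₂ := goldenRatio_lt_thirteen_eighths
  have hlow : valF (w ++ [0, 0, 0, 0]) < valF (u ++ [0]) + 1 := by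
    exact_mod_cast (by nlinarith [Nat.cast_nonneg (α := ℝ) v] :
      (valF (w ++ [0, 0, 0, 0]) : ℝ) < valF (u ++ [0]) + 1)
  have hhigh : valF (u ++ [0]) < valF (w ++ [0, 0, 0, 0]) + 8 := by
    exact_mod_cast (by nlinarith :
      (valF (u ++ [0]) : ℝ) < valF (w ++ [0, 0, 0, 0]) + 8)
  constructor <;> omega

lemma length_eq_three_of_mem_Sset {t : List ℕ} (ht : t ∈ Sset) : t.length = 3 := by
  simp only [Sset, Set.mem_insert_iff, Set.mem_singleton_iff] at ht
  rcases ht with rfl | rfl | rfl | rfl | rfl <;> rfl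

lemma valF_le_four_of_mem_Sset {t : List ℕ} (ht : t ∈ Sset) : valF t ≤ 4 := by
  simp only [Sset, Set.mem_insert_iff, Set.mem_singleton_iff] at ht
  rcases ht with rfl | rfl | rfl | rfl | rfl <;> decide

lemma injOn_valF_Sset : Set.InjOn valF Sset := by
  intro s hs t ht h
  simp only [Sset, Set.mem_insert_iff, Set.mem_singleton_iff] at hs ht
  rcases hs with rfl | rfl | rfl | rfl | rfl <;> rcases ht with rfl | rfl | rfl | rfl | rfl <;>
    first | rfl | exact absurd h (by decide)

lemma exists_mem_Sset_valF_eq {r : ℕ} (hr : r ≤ 4) : ∃ t ∈ Sset, valF t = r := by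
  interval_cases r
  exacts [⟨[0,0,0], by simp [Sset], rfl⟩, ⟨[0,0,1], by simp [Sset], rfl⟩,
    ⟨[0,1,0], by simp [Sset], rfl⟩, ⟨[1,0,0], by simp [Sset], rfl⟩, ⟨[1,0,1], by simp [Sset], rfl⟩]

lemma existsUnique_mul_five_add_valF {N : ℕ} (hN : N ≤ 9) :
    ∃! bt : ℕ × List ℕ, (bt.1 ≤ 1 ∧ bt.2 ∈ Sset) ∧ N = bt.1 * 5 + valF bt.2 := by
  obtain ⟨t, ht, htN⟩ := exists_mem_Sset_valF_eq (r := N % 5) (by omega)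
  refine ⟨(N / 5, t), ⟨⟨by omega, ht⟩, by dsimp only; omega⟩, ?_⟩
  rintro ⟨b', t'⟩ ⟨⟨-, ht'⟩, hN'⟩
  have ht'4 := valF_le_four_of_mem_Sset ht'
  simp only [Prod.mk.injEq]
  exact ⟨by omega, injOn_valF_Sset ht' ht (by omega)⟩

lemma valF_append_cons_of_mem_Sset (w : List ℕ) (b : ℕ) {t : List ℕ} (ht : t ∈ Sset) :
    valF (w ++ b :: t) = valF (w ++ [0, 0, 0, 0]) + (b * 5 + valF t) := by
  rw [valF_append, valF, length_cons, length_eq_three_of_mem_Sset ht]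
  rfl

theorem tree_structure (u w : List ℕ) (s : List ℕ)
    (hu : ∀ x ∈ u, x ≤ 2) (hw : ∀ x ∈ w, x ≤ 1) (hs : s ∈ Sset)
    (hlen : u.length = w.length) (hval : valF u = valF (w ++ s)) :
    ∀ a : ℕ, a ≤ 2 →
      ∃! bt : ℕ × List ℕ, (bt.1 ≤ 1 ∧ bt.2 ∈ Sset) ∧
        valF (u ++ [a]) = valF (w ++ bt.1 :: bt.2) := by
  intro a ha
  have hval' : valF u = valF (w ++ [0, 0, 0]) + valF s := by
    rw [hval, valF_append, length_eq_three_of_mem_Sset hs]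
    rfl
  obtain ⟨hlow, hhigh⟩ :=
    valF_append_zero_mem_Icc hlen hu hw (valF_le_four_of_mem_Sset hs) hval'
  refine (existsUnique_congr fun bt ↦ and_congr_right fun hbt ↦ ?_).2
    (existsUnique_mul_five_add_valF (N := valF (u ++ [0]) - valF (w ++ [0, 0, 0, 0]) + a)
      (by omega))
  rw [valF_append_singleton, valF_append_cons_of_mem_Sset w bt.1 hbt.2]
  omega
end

section
/- There exist unique maps w : {0,1,2}* → {0,1}* (length-preserving) and s : {0,1,2}* → S (with S the five length-3 binary words avoiding 11) such that for every ternary word u and every digit a ∈ {0,1,2}: w(u) is a prefix of w(u·a), and val_F(u) = val_F(w(u)·s(u)). -/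
/-- The set of ternary words. -/
def Ternary := {u : List ℕ // ∀ x ∈ u, x ≤ 2}

/-! ### Auxiliary machinery -/

/-- `valfib k w = ∑ w_i fib (i + k)` (lsd at index 0). -/
def valfib (k : ℕ) : List ℕ → ℕ
  | [] => 0
  | a :: t => a * Nat.fib (t.length + k) + valfib k t

lemma valF_eq_s19 (x : List ℕ) : valF x = valfib 2 x := by
  induction x with
  | nil => rfl
  | cons a t ih => simp [valF, valfib, F, ih]

lemma valfib_append (k : ℕ) (x y : List ℕ) :
    valfib k (x ++ y) = valfib (k + y.length) x + valfib k y := by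
  induction x with
  | nil => simp [valfib]
  | cons d t ih =>
    have h : (t ++ y).length + k = t.length + (k + y.length) := by
      rw [List.length_append]; omega
    show d * Nat.fib ((t ++ y).length + k) + valfib k (t ++ y) =
      d * Nat.fib (t.length + (k + y.length)) + valfib (k + y.length) t + valfib k y
    rw [h, ih]; ring

lemma valfib_step (k : ℕ) (x : List ℕ) :
    valfib (k+2) x = valfib (k+1) x + valfib k x := by
  induction x with
  | nil => rfl
  | cons d t ih =>
    have h : t.length + (k+2) = (t.length + k) + 2 := by omega
    have h1 : t.length + (k+1) = t.length + k + 1 := by omega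
    simp only [valfib, ih, h, h1, Nat.fib_add_two]
    ring

lemma valfib_single (k b : ℕ) : valfib k [b] = b * Nat.fib k := by
  simp [valfib]

lemma valfib_snoc (k : ℕ) (W : List ℕ) (b : ℕ) :
    valfib k (W ++ [b]) = valfib (k+1) W + b * Nat.fib k := by
  rw [valfib_append, valfib_single]
  simp

/-- One step of the translation automaton: state `(v, v')`, input digit `a`,
output `(bit, new state)`. -/
def step (st : ℕ × ℕ) (a : ℕ) : ℕ × ℕ × ℕ :=
  if st.1 + st.2 + a ≤ 4 then (0, st.1 + st.2 + a, st.1 + a)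
  else (1, st.1 + st.2 + a - 5, st.1 + a - 3)

/-- Reachable states of the automaton. -/
def Rlist : List (ℕ × ℕ) :=
  [(0,0),(0,1),(1,0),(1,1),(2,1),(2,2),(3,2),(3,3),(4,2),(4,3)]

lemma stepProp : ∀ st ∈ Rlist, ∀ a ∈ [0,1,2],
    (step st a).1 ≤ 1 ∧ (step st a).2 ∈ Rlist ∧
    st.1 + st.2 + a = 5 * (step st a).1 + (step st a).2.1 ∧
    st.1 + a = 3 * (step st a).1 + (step st a).2.2 := by decide

lemma Rbound : ∀ st ∈ Rlist, st.1 ≤ 4 := by decide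

def runf (p : List ℕ × ℕ × ℕ) (a : ℕ) : List ℕ × ℕ × ℕ :=
  (p.1 ++ [(step p.2 a).1], (step p.2 a).2)

def run (l : List ℕ) : List ℕ × ℕ × ℕ := l.foldl runf ([], 0, 0)

lemma run_append (l : List ℕ) (a : ℕ) :
    run (l ++ [a]) = ((run l).1 ++ [(step (run l).2 a).1], (step (run l).2 a).2) := by
  simp [run, List.foldl_append, runf]

def enc : ℕ → List ℕ
  | 0 => [0,0,0]
  | 1 => [0,0,1]
  | 2 => [0,1,0]
  | 3 => [1,0,0]
  | _ => [1,0,1]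

def SsetL : List (List ℕ) := [[0,0,0],[0,0,1],[0,1,0],[1,0,0],[1,0,1]]

lemma mem_Sset_iff (s : List ℕ) : s ∈ Sset ↔ s ∈ SsetL := by
  simp [Sset, SsetL]

lemma enc_mem (v : ℕ) : enc v ∈ Sset := by
  rw [mem_Sset_iff]
  rcases v with _|_|_|_|n <;>
    first
      | decide
      | exact (by decide : ([1,0,1] : List ℕ) ∈ SsetL)

lemma enc_len (v : ℕ) : (enc v).length = 3 := by
  rcases v with _|_|_|_|n <;> rfl

lemma valF_enc : ∀ v ≤ 4, valF (enc v) = v := by decide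

lemma Sset_val : ∀ s ∈ SsetL, valF s ≤ 4 ∧ enc (valF s) = s ∧ s.length = 3 := by decide

lemma mem012 {a : ℕ} (ha : a ≤ 2) : a ∈ [0,1,2] := by
  interval_cases a <;> decide

lemma val_append_s (W s : List ℕ) (hs : s.length = 3) :
    valF (W ++ s) = valfib 5 W + valF s := by
  rw [valF_eq_s19, valfib_append, hs, show (2+3 : ℕ) = 5 from rfl, ← valF_eq_s19]

/-- The value of `(W ++ [b]) ++ s` for a length-3 `s`. -/
lemma val_snoc_s (W : List ℕ) (b : ℕ) (s : List ℕ) (hs : s.length = 3) :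
    valF ((W ++ [b]) ++ s) = valfib 6 W + 5 * b + valF s := by
  rw [val_append_s _ _ hs, valfib_snoc, show Nat.fib 5 = 5 from rfl,
    show (5+1 : ℕ) = 6 from rfl]
  ring

/-- Main invariant of the automaton. -/
lemma run_inv : ∀ l : List ℕ, (∀ x ∈ l, x ≤ 2) →
    (run l).1.length = l.length ∧ (∀ x ∈ (run l).1, x ≤ 1) ∧
    (run l).2 ∈ Rlist ∧
    valfib 2 l = valfib 5 (run l).1 + (run l).2.1 ∧
    valfib 1 l = valfib 4 (run l).1 + (run l).2.2 := by
  intro l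
  induction l using List.reverseRecOn with
  | nil => exact fun _ => ⟨rfl, by simp [run, runf], by decide, rfl, rfl⟩
  | append_singleton l a ih =>
    intro h
    have hl : ∀ x ∈ l, x ≤ 2 := fun x hx => h x (by simp [hx])
    have ha : a ≤ 2 := h a (by simp)
    obtain ⟨hlen, hbin, hR, hv, hv'⟩ := ih hl
    obtain ⟨hb1, hR', he1, he2⟩ := stepProp _ hR a (mem012 ha)
    rw [run_append]
    refine ⟨by simp [hlen], ?_, hR', ?_, ?_⟩
    · intro x hx
      rcases List.mem_append.1 hx with h' | h'
      · exact hbin x h'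
      · simp at h'; omega
    · have e1 := valfib_snoc 2 l a
      have e2 := valfib_snoc 5 (run l).1 ((step (run l).2 a).1)
      have e3 := valfib_step 1 l
      have e4 := valfib_step 4 (run l).1
      rw [show Nat.fib 2 = 1 from rfl] at e1
      rw [show Nat.fib 5 = 5 from rfl] at e2
      norm_num at e1 e2 e3 e4
      dsimp only
      omega
    · have e1 := valfib_snoc 1 l a
      have e2 := valfib_snoc 4 (run l).1 ((step (run l).2 a).1)
      rw [show Nat.fib 1 = 1 from rfl] at e1
      rw [show Nat.fib 4 = 3 from rfl] at e2
      norm_num at e1 e2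
      dsimp only
      omega

lemma prefix_snoc (x y : List ℕ) (h : x <+: y) (hl : y.length = x.length + 1) :
    ∃ b, y = x ++ [b] := by
  obtain ⟨t, rfl⟩ := h
  have ht : t.length = 1 := by simp [List.length_append] at hl; omega
  obtain ⟨b, rfl⟩ := List.length_eq_one_iff.mp ht
  exact ⟨b, rfl⟩

theorem canonical_translation :
    ∃! ws : (Ternary → List ℕ) × (Ternary → List ℕ),
      (∀ u : Ternary, (ws.1 u).length = u.1.length) ∧
      (∀ u : Ternary, ∀ x ∈ ws.1 u, x ≤ 1) ∧
      (∀ u : Ternary, ws.2 u ∈ Sset) ∧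
      (∀ u u' : Ternary, ∀ a : ℕ, a ≤ 2 → u'.1 = u.1 ++ [a] →
        ws.1 u <+: ws.1 u') ∧
      (∀ u : Ternary, valF u.1 = valF (ws.1 u ++ ws.2 u)) := by
  refine ⟨(fun u => (run u.1).1, fun u => enc (run u.1).2.1), ⟨?_, ?_, ?_, ?_, ?_⟩, ?_⟩
  · exact fun u => (run_inv u.1 u.2).1
  · exact fun u => (run_inv u.1 u.2).2.1
  · exact fun u => enc_mem _
  · intro u u' a ha h
    show (run u.1).1 <+: (run u'.1).1
    rw [h, run_append]
    exact List.prefix_append _ _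
  · intro u
    obtain ⟨_, _, hR, hv, _⟩ := run_inv u.1 u.2
    have hvb : (run u.1).2.1 ≤ 4 := Rbound _ hR
    show valF u.1 = valF ((run u.1).1 ++ enc (run u.1).2.1)
    rw [val_append_s _ _ (enc_len _), valF_enc _ hvb, valF_eq_s19 u.1, hv]
  · rintro ⟨w', s'⟩ ⟨h1, h2, h3, h4, h5⟩
    dsimp only at h1 h2 h3 h4 h5
    have key : ∀ l, ∀ hl : ∀ x ∈ l, x ≤ 2,
        w' ⟨l, hl⟩ = (run l).1 ∧ s' ⟨l, hl⟩ = enc (run l).2.1 := by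
      intro l
      induction l using List.reverseRecOn with
      | nil =>
        intro hl
        have hw : w' ⟨[], hl⟩ = [] := List.length_eq_zero_iff.mp (h1 ⟨[], hl⟩)
        have hs := h5 ⟨[], hl⟩
        rw [hw] at hs
        simp only [List.nil_append] at hs
        have hmem := (mem_Sset_iff _).1 (h3 ⟨[], hl⟩)
        obtain ⟨_, hencv, _⟩ := Sset_val _ hmem
        refine ⟨hw, ?_⟩
        have h0 : valF (s' ⟨[], hl⟩) = 0 := by
          have hnil : valF ([] : List ℕ) = 0 := rfl
          omega
        rw [← hencv, h0]
        rfl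
      | append_singleton l a ih =>
        intro hl
        have hl' : ∀ x ∈ l, x ≤ 2 := fun x hx => hl x (by simp [hx])
        have ha : a ≤ 2 := hl a (by simp)
        obtain ⟨ihw, ihs⟩ := ih hl'
        have hpre := h4 ⟨l, hl'⟩ ⟨l ++ [a], hl⟩ a ha rfl
        have hlen' : (w' ⟨l ++ [a], hl⟩).length = (w' ⟨l, hl'⟩).length + 1 := by
          have e1 := h1 ⟨l ++ [a], hl⟩
          have e2 := h1 ⟨l, hl'⟩
          simp only [List.length_append, List.length_singleton] at e1 e2
          omega
        obtain ⟨b, hb⟩ := prefix_snoc _ _ hpre hlen'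
        have hbbin : b ≤ 1 := h2 ⟨l ++ [a], hl⟩ b (by rw [hb]; simp)
        -- value from the candidate solution
        have hsmem := (mem_Sset_iff _).1 (h3 ⟨l ++ [a], hl⟩)
        obtain ⟨hsle, hsenc, hslen⟩ := Sset_val _ hsmem
        have hv1 := h5 ⟨l ++ [a], hl⟩
        rw [hb, ihw, val_snoc_s _ _ _ hslen] at hv1
        -- value from our construction
        obtain ⟨_, _, hR, hv, hv'⟩ := run_inv l hl'
        obtain ⟨hb1, hR', he1, he2⟩ := stepProp _ hR a (mem012 ha)
        have hvb' : (step (run l).2 a).2.1 ≤ 4 := Rbound _ hR'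
        have e1 := valfib_snoc 2 l a
        have e3 := valfib_step 1 l
        have e4 := valfib_step 4 (run l).1
        rw [show Nat.fib 2 = 1 from rfl] at e1
        norm_num at e1 e3 e4
        rw [valF_eq_s19] at hv1
        dsimp only at hv1
        have hbe : b = (step (run l).2 a).1 ∧
            valF (s' ⟨l ++ [a], hl⟩) = (step (run l).2 a).2.1 := by omega
        constructor
        · rw [hb, ihw, run_append]
          dsimp only
          rw [hbe.1]
        · rw [run_append]
          dsimp only
          rw [← hsenc, hbe.2]
    simp only [Prod.mk.injEq]
    constructor <;> funext u <;> obtain ⟨l, hlu⟩ := u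
    · exact (key l hlu).1
    · exact (key l hlu).2
end
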